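/- Let A be an m×m Cartier-Foata matrix and n < m. In the completed free algebra modulo the Cartier-Foata relations, the product (I-A)^{-1}_{n+1,n+1} · (I-A^{n+1,n+1})^{-1}_{n+2,n+2} ⋯ (I - [[A₀, a_{*m}],[a_{m*}, a_{mm}]])^{-1}_{mm} equals (I-C)^{-1}_{n+1,n+1} · (I-C^{n+1,n+1})^{-1}_{n+2,n+2} ⋯ (1 - c_{mm})^{-1}, where A^{k,k} denotes the matrix with row and column k removed iteratively (keeping rows/columns ≤ n and > current index), and c_{ij} = a_{ij} + a_{i*}(I-A₀)^{-1}a_{*j}. -/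
import Mathlib

/-- Noncommutative Schur-complement inverse identity: if `M` and its top-left block
are (two-sidedly) invertible, then the Schur complement is invertible with inverse
the bottom-right block of `M⁻¹`. -/
lemma schur_aux {R : Type*} [Ring R] {p q : Type*} [Fintype p] [Fintype q]
    [DecidableEq p] [DecidableEq q]
    (M X : Matrix (p ⊕ q) (p ⊕ q) R) (hMX : M * X = 1) (hXM : X * M = 1)
    (Y : Matrix p p R) (hY1 : M.toBlocks₁₁ * Y = 1) (hY2 : Y * M.toBlocks₁₁ = 1) :
    (M.toBlocks₂₂ - M.toBlocks₂₁ * Y * M.toBlocks₁₂) * X.toBlocks₂₂ = 1 ∧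
      X.toBlocks₂₂ * (M.toBlocks₂₂ - M.toBlocks₂₁ * Y * M.toBlocks₁₂) = 1 := by
  set P := M.toBlocks₁₁ with hP
  set Q := M.toBlocks₁₂ with hQ
  set D := M.toBlocks₂₁ with hD
  set E := M.toBlocks₂₂ with hE
  set A := X.toBlocks₁₁ with hA
  set B := X.toBlocks₁₂ with hB
  set C := X.toBlocks₂₁ with hC
  set F := X.toBlocks₂₂ with hF
  have hM : M = Matrix.fromBlocks P Q D E := (Matrix.fromBlocks_toBlocks M).symm
  have hX : X = Matrix.fromBlocks A B C F := (Matrix.fromBlocks_toBlocks X).symm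
  rw [hM, hX, Matrix.fromBlocks_multiply, ← Matrix.fromBlocks_one] at hMX hXM
  have h12 : P * B + Q * F = 0 := by
    have := congrArg Matrix.toBlocks₁₂ hMX
    simpa only [Matrix.toBlocks_fromBlocks₁₂] using this
  have h22 : D * B + E * F = 1 := by
    have := congrArg Matrix.toBlocks₂₂ hMX
    simpa only [Matrix.toBlocks_fromBlocks₂₂] using this
  have h21' : C * P + F * D = 0 := by
    have := congrArg Matrix.toBlocks₂₁ hXM
    simpa only [Matrix.toBlocks_fromBlocks₂₁] using this
  have h22' : C * Q + F * E = 1 := by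
    have := congrArg Matrix.toBlocks₂₂ hXM
    simpa only [Matrix.toBlocks_fromBlocks₂₂] using this
  have hQF : Q * F = -(P * B) := neg_eq_of_add_eq_zero_right h12 |>.symm
  have hFD : F * D = -(C * P) := neg_eq_of_add_eq_zero_right h21' |>.symm
  constructor
  · rw [Matrix.sub_mul, Matrix.mul_assoc (D * Y) Q F, hQF, Matrix.mul_neg,
      ← Matrix.mul_assoc (D * Y) P B, Matrix.mul_assoc D Y P, hY2, Matrix.mul_one,
      sub_neg_eq_add, add_comm, h22]
  · rw [Matrix.mul_sub, ← Matrix.mul_assoc F (D * Y) Q, ← Matrix.mul_assoc F D Y, hFD,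
      Matrix.neg_mul, Matrix.neg_mul, Matrix.mul_assoc (C * P) Y Q,
      Matrix.mul_assoc C P (Y * Q), ← Matrix.mul_assoc P Y Q, hY1, Matrix.one_mul,
      sub_neg_eq_add, add_comm (F * E), h22']

/-- For a Cartier–Foata matrix `A`, the iterated product of diagonal inverse entries
`(I-A)⁻¹_{n+1,n+1} (I-A^{n+1,n+1})⁻¹_{n+2,n+2} ⋯` equals
`(I-C)⁻¹_{n+1,n+1} (I-C^{n+1,n+1})⁻¹_{n+2,n+2} ⋯ (1 - c_{mm})⁻¹`, where at step `t`
all rows/columns `n+1, …, n+t` have been removed (keeping indices `≤ n` and `> n+t`),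
and `c_{ij} = a_{ij} + a_{i*}(I-A₀)⁻¹ a_{*j}`.  All inverses are hypothesized two-sided
inverses, as hold in the completed algebra. -/
theorem iterated_inverse_entries_eq {R : Type*} [Ring R] (m n : ℕ) (hn : n < m)
    (a : Matrix (Fin m) (Fin m) R)
    (hcf : ∀ i j k l : Fin m, i ≠ j → a i k * a j l = a j l * a i k)
    (Y : Matrix (Fin n) (Fin n) R)
    (hY1 : (1 - a.submatrix (Fin.castLE hn.le) (Fin.castLE hn.le)) * Y = 1)
    (hY2 : Y * (1 - a.submatrix (Fin.castLE hn.le) (Fin.castLE hn.le)) = 1)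
    -- embedding of the index set {1,…,n} ∪ {n+t+1,…,m} (0-indexed: {0,…,n-1} ∪ {n+t,…,m-1})
    (embA : ∀ t : Fin (m - n), Fin (m - (t : ℕ)) → Fin m)
    (hembA : ∀ t : Fin (m - n), ∀ r : Fin (m - (t : ℕ)),
      (embA t r : ℕ) = if (r : ℕ) < n then (r : ℕ) else (r : ℕ) + (t : ℕ))
    -- two-sided inverses of the successively truncated matrices I - A_t
    (Xa : ∀ t : Fin (m - n), Matrix (Fin (m - (t : ℕ))) (Fin (m - (t : ℕ))) R)
    (hXa1 : ∀ t, (1 - a.submatrix (embA t) (embA t)) * Xa t = 1)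
    (hXa2 : ∀ t, Xa t * (1 - a.submatrix (embA t) (embA t)) = 1) :
    let e : Fin (m - n) → Fin m := fun k => ⟨n + (k : ℕ), by have := k.isLt; omega⟩
    let c : Matrix (Fin (m - n)) (Fin (m - n)) R :=
      Matrix.of fun k l => a (e k) (e l) +
        ∑ r : Fin n, ∑ s : Fin n,
          a (e k) (Fin.castLE hn.le r) * Y r s * a (Fin.castLE hn.le s) (e l)
    ∀ (embC : ∀ t : Fin (m - n), Fin (m - n - (t : ℕ)) → Fin (m - n))
      (_ : ∀ t : Fin (m - n), ∀ r : Fin (m - n - (t : ℕ)),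
        (embC t r : ℕ) = (r : ℕ) + (t : ℕ))
      (Xc : ∀ t : Fin (m - n), Matrix (Fin (m - n - (t : ℕ))) (Fin (m - n - (t : ℕ))) R),
      (∀ t, (1 - c.submatrix (embC t) (embC t)) * Xc t = 1) →
      (∀ t, Xc t * (1 - c.submatrix (embC t) (embC t)) = 1) →
      (List.ofFn fun t : Fin (m - n) =>
          Xa t ⟨n, by have := t.isLt; omega⟩ ⟨n, by have := t.isLt; omega⟩).prod =
        (List.ofFn fun t : Fin (m - n) =>
          Xc t ⟨0, by have := t.isLt; omega⟩ ⟨0, by have := t.isLt; omega⟩).prod := by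
  intro e c embC hembC Xc hXc1 hXc2
  have key : ∀ t : Fin (m - n),
      Xa t ⟨n, by have := t.isLt; omega⟩ ⟨n, by have := t.isLt; omega⟩ =
        Xc t ⟨0, by have := t.isLt; omega⟩ ⟨0, by have := t.isLt; omega⟩ := by
    intro t
    have ht := t.isLt
    have hmt : n + (m - n - (t : ℕ)) = m - (t : ℕ) := by omega
    set eqt : Fin n ⊕ Fin (m - n - (t : ℕ)) ≃ Fin (m - (t : ℕ)) :=
      finSumFinEquiv.trans (finCongr hmt) with heqt
    have hvl : ∀ i : Fin n, ((eqt (Sum.inl i)) : ℕ) = (i : ℕ) := by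
      intro i; simp [heqt]
    have hvr : ∀ r : Fin (m - n - (t : ℕ)), ((eqt (Sum.inr r)) : ℕ) = n + (r : ℕ) := by
      intro r; simp [heqt]
    have hinl : ∀ i : Fin n, embA t (eqt (Sum.inl i)) = Fin.castLE hn.le i := by
      intro i
      apply Fin.ext
      rw [hembA, hvl, if_pos i.isLt]
      rfl
    have hinr : ∀ r : Fin (m - n - (t : ℕ)),
        embA t (eqt (Sum.inr r)) = e (embC t r) := by
      intro r
      apply Fin.ext
      rw [hembA, hvr, if_neg (by omega)]
      have h1 : (e (embC t r) : ℕ) = n + (embC t r : ℕ) := rfl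
      rw [h1, hembC]
      omega
    set M' : Matrix (Fin n ⊕ Fin (m - n - (t : ℕ))) (Fin n ⊕ Fin (m - n - (t : ℕ))) R :=
      ((1 : Matrix (Fin (m - (t : ℕ))) (Fin (m - (t : ℕ))) R)
        - a.submatrix (embA t) (embA t)).submatrix eqt eqt with hM'
    set X' : Matrix (Fin n ⊕ Fin (m - n - (t : ℕ))) (Fin n ⊕ Fin (m - n - (t : ℕ))) R :=
      (Xa t).submatrix eqt eqt with hX'
    have hM'X' : M' * X' = 1 := by
      rw [hM', hX', Matrix.submatrix_mul_equiv, hXa1 t, Matrix.submatrix_one_equiv]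
    have hX'M' : X' * M' = 1 := by
      rw [hM', hX', Matrix.submatrix_mul_equiv, hXa2 t, Matrix.submatrix_one_equiv]
    have hP11 : M'.toBlocks₁₁ =
        1 - a.submatrix (Fin.castLE hn.le) (Fin.castLE hn.le) := by
      ext i j
      simp only [hM', Matrix.toBlocks₁₁, Matrix.of_apply, Matrix.submatrix_apply,
        Matrix.sub_apply, Matrix.one_apply, hinl, Equiv.apply_eq_iff_eq, Sum.inl.injEq]
    obtain ⟨hS1, hS2⟩ := schur_aux M' X' hM'X' hX'M' Y
      (by rw [hP11]; exact hY1) (by rw [hP11]; exact hY2)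
    have hS : M'.toBlocks₂₂ - M'.toBlocks₂₁ * Y * M'.toBlocks₁₂ =
        1 - c.submatrix (embC t) (embC t) := by
      ext r s
      simp only [hM', Matrix.toBlocks₂₂, Matrix.toBlocks₂₁, Matrix.toBlocks₁₂,
        Matrix.of_apply, Matrix.submatrix_apply, Matrix.sub_apply, Matrix.one_apply,
        Matrix.mul_apply, hinl, hinr, Equiv.apply_eq_iff_eq, Sum.inr.injEq,
        reduceCtorEq, if_false, zero_sub, neg_mul, mul_neg, neg_neg,
        Finset.sum_neg_distrib, c, Finset.sum_mul]
      rw [Finset.sum_comm, sub_sub]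
    have hXcF : Xc t = X'.toBlocks₂₂ := by
      have h1 : (1 - c.submatrix (embC t) (embC t)) * X'.toBlocks₂₂ = 1 := by
        rw [← hS]; exact hS1
      calc Xc t = Xc t * ((1 - c.submatrix (embC t) (embC t)) * X'.toBlocks₂₂) := by
            rw [h1, Matrix.mul_one]
        _ = (Xc t * (1 - c.submatrix (embC t) (embC t))) * X'.toBlocks₂₂ :=
            (Matrix.mul_assoc _ _ _).symm
        _ = X'.toBlocks₂₂ := by rw [hXc2 t, Matrix.one_mul]
    have h0 : eqt (Sum.inr (⟨0, by omega⟩ : Fin (m - n - (t : ℕ)))) =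
        (⟨n, by omega⟩ : Fin (m - (t : ℕ))) := by
      apply Fin.ext
      rw [hvr]
      simp
    rw [hXcF]
    show Xa t _ _ = X' (Sum.inr ⟨0, by omega⟩) (Sum.inr ⟨0, by omega⟩)
    rw [hX', Matrix.submatrix_apply, h0]
  exact congrArg List.prod (congrArg List.ofFn (funext key))
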